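/- Let (U, g) be a Riemannian manifold and let f₁, f₂ be smooth functions on U satisfying the static equation ∇²f_i = f_i·Ric(g) for i = 1, 2. Then the vector field K = f₂∇f₁ − f₁∇f₂ is a Killing field: for all vector fields Y, Z one has ⟨∇_Y K, Z⟩ + ⟨∇_Z K, Y⟩ = 0. In particular, ∇_X K = (Xf₂)∇f₁ − (Xf₁)∇f₂ for every vector field X. -/

import Mathlib

/-!
Differentiating `K = f₂ ∇f₁ - f₁ ∇f₂` by the Leibniz rule, the static equations turn the
second-order terms into `f₂ f₁ Ric(X)^♯ - f₁ f₂ Ric(X)^♯ = 0`, so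
`∇_X K = (Xf₂) ∇f₁ - (Xf₁) ∇f₂`. Pairing with `Z` gives `(Xf₂)(Zf₁) - (Xf₁)(Zf₂)`, which is
antisymmetric in `X` and `Z`.
-/

section

variable {M V : Type} [NormedAddCommGroup V] [InnerProductSpace ℝ V]

theorem conn_smul_sub_smul_of_conn_eq_smul
    (D : (M → V) → (M → ℝ) → M → ℝ) (conn : (M → V) → (M → V) → M → V)
    (leibniz : ∀ (X : M → V) (h : M → ℝ) (Y : M → V) (p : M),
      conn X (fun q => h q • Y q) p = D X h p • Y p + h p • conn X Y p)
    (conn_sub : ∀ (X Y₁ Y₂ : M → V) (p : M),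
      conn X (fun q => Y₁ q - Y₂ q) p = conn X Y₁ p - conn X Y₂ p)
    {X A B W : M → V} {f g : M → ℝ} {p : M}
    (hA : conn X A p = f p • W p) (hB : conn X B p = g p • W p) :
    conn X (fun q => g q • A q - f q • B q) p = D X g p • A p - D X f p • B p := by
  rw [conn_sub, leibniz, leibniz, hA, hB, smul_smul, smul_smul, mul_comm (g p)]
  abel

theorem inner_smul_grad_sub_add_inner_smul_grad_sub_eq_zero
    (D : (M → V) → (M → ℝ) → M → ℝ) (grad : (M → ℝ) → M → V)
    (grad_dual : ∀ (h : M → ℝ) (Z : M → V) (p : M), inner ℝ (grad h p) (Z p) = D Z h p)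
    (f₁ f₂ : M → ℝ) (Y Z : M → V) (p : M) :
    inner ℝ (D Y f₂ p • grad f₁ p - D Y f₁ p • grad f₂ p) (Z p)
      + inner ℝ (D Z f₂ p • grad f₁ p - D Z f₁ p • grad f₂ p) (Y p) = 0 := by
  simp only [inner_sub_left, real_inner_smul_left, grad_dual]
  ring

end

/-- **Killing fields from static potentials**: if `∇² f_i = f_i · Ric` for `i = 1, 2`
then `K = f₂ ∇f₁ - f₁ ∇f₂` satisfies `∇_X K = (Xf₂) ∇f₁ - (Xf₁) ∇f₂` for every
vector field `X`; in particular `⟨∇_Y K, Z⟩ + ⟨∇_Z K, Y⟩ = 0` for all vector fields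
`Y, Z`, i.e. `K` is a Killing field. -/
theorem static_gives_killing
    (M : Type) (V : Type) [NormedAddCommGroup V] [InnerProductSpace ℝ V]
    -- the directional derivative: `D X f = X f`
    (D : (M → V) → (M → ℝ) → M → ℝ)
    -- the Levi-Civita connection `∇`
    (conn : (M → V) → (M → V) → M → V)
    -- the gradient
    (grad : (M → ℝ) → M → V)
    -- the vector form of the Ricci curvature: `Ric(X, Y) = ⟪ricVec X, Y⟫`
    (ricVec : (M → V) → M → V)
    -- the Leibniz rule `∇_X (f Y) = (Xf) Y + f ∇_X Y`
    (leibniz : ∀ (X : M → V) (h : M → ℝ) (Y : M → V) (p : M),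
      conn X (fun q => h q • Y q) p = D X h p • Y p + h p • conn X Y p)
    -- additivity of the connection: `∇_X (Y₁ - Y₂) = ∇_X Y₁ - ∇_X Y₂`
    (conn_sub : ∀ (X Y₁ Y₂ : M → V) (p : M),
      conn X (fun q => Y₁ q - Y₂ q) p = conn X Y₁ p - conn X Y₂ p)
    -- the gradient is metric-dual to the differential: `⟨∇f, Z⟩ = Z f`
    (grad_dual : ∀ (h : M → ℝ) (Z : M → V) (p : M),
      (inner ℝ (grad h p) (Z p) : ℝ) = D Z h p)
    -- the static equations `∇_X ∇fᵢ = fᵢ Ric(X, ·)^♯`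
    (f₁ f₂ : M → ℝ)
    (static₁ : ∀ (X : M → V) (p : M), conn X (grad f₁) p = f₁ p • ricVec X p)
    (static₂ : ∀ (X : M → V) (p : M), conn X (grad f₂) p = f₂ p • ricVec X p) :
    (∀ (X : M → V) (p : M),
      conn X (fun q => f₂ q • grad f₁ q - f₁ q • grad f₂ q) p
        = D X f₂ p • grad f₁ p - D X f₁ p • grad f₂ p) ∧
    ∀ (Y Z : M → V) (p : M),
      (inner ℝ (conn Y (fun q => f₂ q • grad f₁ q - f₁ q • grad f₂ q) p) (Z p) : ℝ)
        + (inner ℝ (conn Z (fun q => f₂ q • grad f₁ q - f₁ q • grad f₂ q) p) (Y p) : ℝ)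
        = 0 := by
  have conn_K : ∀ (X : M → V) (p : M),
      conn X (fun q => f₂ q • grad f₁ q - f₁ q • grad f₂ q) p
        = D X f₂ p • grad f₁ p - D X f₁ p • grad f₂ p := fun X p =>
    conn_smul_sub_smul_of_conn_eq_smul D conn leibniz conn_sub (static₁ X p) (static₂ X p)
  refine ⟨conn_K, fun Y Z p => ?_⟩
  rw [conn_K, conn_K]
  exact inner_smul_grad_sub_add_inner_smul_grad_sub_eq_zero D grad grad_dual f₁ f₂ Y Z p
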